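/- arXiv:1401.1894 — 4 statements merged into one kernel-verified Lean document; each statement's English description precedes it below -/
import Mathlib

section
/- For every subset S of Baire space and every ordinal α, the Wadge remainder Rm_α(S) equals [S_α], the set of infinite sequences all of whose finite initial segments lie in the simplified remainder S_α. -/
open Filter Topology Classical

/-- The initial segment `f↾n` of an infinite sequence. -/
def res (f : ℕ → ℕ) (n : ℕ) : List ℕ := List.ofFn (fun i : Fin n => f i)

/-- `[X]`: the set of infinite sequences all of whose finite initial segments lie in `X`. -/
def seqsIn (X : Set (List ℕ)) : Set (ℕ → ℕ) := {f | ∀ n, res f n ∈ X}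

/-- The simplified remainder `S_α`. -/
noncomputable def SRem (S : Set (ℕ → ℕ)) (α : Ordinal.{0}) : Set (List ℕ) :=
  Ordinal.limitRecOn α Set.univ
    (fun _ prev => {x | x ∈ prev ∧ ∃ f g : ℕ → ℕ,
      f ∈ seqsIn prev ∧ g ∈ seqsIn prev ∧ res f x.length = x ∧ res g x.length = x ∧
      f ∈ S ∧ g ∉ S})
    (fun _ _ ih => ⋂ (β : Ordinal.{0}) (h : β < _), ih β h)

/-- Wadge's remainder `Rm_μ(A,B)`. -/
noncomputable def Rm (A B : Set (ℕ → ℕ)) (μ : Ordinal.{0}) : Set (ℕ → ℕ) :=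
  if μ = 0 then Set.univ
  else ⋂ (ν : {ν : Ordinal.{0} // ν < μ}),
    closure (Rm A B ν.1 ∩ A) ∩ closure (Rm A B ν.1 ∩ B)
termination_by μ
decreasing_by exact ν.2

/-- The least ordinal at which the simplified remainders stabilize. -/
noncomputable def alphaS (S : Set (ℕ → ℕ)) : Ordinal.{0} :=
  sInf {α | SRem S α = SRem S (α + 1)}

/-- `S_∞`, the stable value of the simplified remainders. -/
noncomputable def Sinf (S : Set (ℕ → ℕ)) : Set (List ℕ) := SRem S (alphaS S)

/-- `β(σ)`: the least ordinal `γ` with `σ ∉ S_γ`. -/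
noncomputable def betaOf (S : Set (ℕ → ℕ)) (σ : List ℕ) : Ordinal.{0} :=
  sInf {γ | σ ∉ SRem S γ}

/-- `G` guesses `S`. -/
def Guesses (G : List ℕ → Bool) (S : Set (ℕ → ℕ)) : Prop :=
  ∀ f : ℕ → ℕ, ∀ᶠ n in atTop, (G (res f n) = true ↔ f ∈ S)

def Guessable (S : Set (ℕ → ℕ)) : Prop := ∃ G, Guesses G S

/-- `G, H` witness that `S` is guessable with `< α` mind changes. -/
def WitnessMC (S : Set (ℕ → ℕ)) (α : Ordinal.{0}) (G : List ℕ → Bool)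
    (H : List ℕ → Ordinal.{0}) : Prop :=
  Guesses G S ∧ (∀ σ, H σ < α) ∧
  (∀ (f : ℕ → ℕ) (n : ℕ), H (res f (n + 1)) ≤ H (res f n)) ∧
  (∀ (f : ℕ → ℕ) (n : ℕ), G (res f (n + 1)) ≠ G (res f n) →
    H (res f (n + 1)) < H (res f n))

def GuessableMC (S : Set (ℕ → ℕ)) (α : Ordinal.{0}) : Prop := ∃ G H, WitnessMC S α G H

/-- An ordinal is even if it is of the form `λ + n` with `λ` limit or zero and `n` even. -/
def OrdEven (o : Ordinal.{0}) : Prop :=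
  ∃ (l : Ordinal.{0}) (n : ℕ), (l = 0 ∨ Order.IsSuccLimit l) ∧ o = l + n ∧ Even n

/-- The Hausdorff difference set `D_α((A_η)_{η<α})`. -/
def DSet (α : Ordinal.{0}) (A : Ordinal.{0} → Set (ℕ → ℕ)) : Set (ℕ → ℕ) :=
  {x | ∃ η, η < α ∧ x ∈ A η ∧ (∀ η', η' < η → x ∉ A η') ∧ (OrdEven η ↔ ¬ OrdEven α)}

/-- Membership in the class `D_α(Σ⁰₁)`. -/
def InDiff (α : Ordinal.{0}) (S : Set (ℕ → ℕ)) : Prop :=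
  ∃ A : Ordinal.{0} → Set (ℕ → ℕ), (∀ η, η < α → IsOpen (A η)) ∧
    (∀ η η', η ≤ η' → η' < α → A η ⊆ A η') ∧ S = DSet α A
/-- Wadge's `Rm_Ω(S)`: the stable value of `Rm_μ(S, Sᶜ)`. -/
noncomputable def RmInf (S : Set (ℕ → ℕ)) : Set (ℕ → ℕ) :=
  Rm S Sᶜ (sInf {μ : Ordinal.{0} | Rm S Sᶜ μ = Rm S Sᶜ (μ + 1)})

/-- The canonical guesser `G_S`. -/
noncomputable def GS (S : Set (ℕ → ℕ)) (σ : List ℕ) : Bool :=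
  if (∃ f : ℕ → ℕ, res f σ.length = σ ∧ f ∈ seqsIn (SRem S (betaOf S σ - 1))) then
    decide (∃ f : ℕ → ℕ, res f σ.length = σ ∧ f ∈ seqsIn (SRem S (betaOf S σ - 1)) ∧ f ∈ S)
  else if h : σ = [] then false
  else GS S σ.dropLast
termination_by σ.length
decreasing_by
  simp only [List.length_dropLast]
  exact Nat.sub_lt (List.length_pos_iff.mpr h) one_pos

/-- `S` is `F_σ`: a countable union of closed sets. -/
def IsFsigma (S : Set (ℕ → ℕ)) : Prop :=
  ∃ C : ℕ → Set (ℕ → ℕ), (∀ n, IsClosed (C n)) ∧ S = ⋃ n, C n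

/-- Boolean combinations of open sets. -/
inductive BoolComb : Set (ℕ → ℕ) → Prop
  | isOpen {s : Set (ℕ → ℕ)} : IsOpen s → BoolComb s
  | compl {s : Set (ℕ → ℕ)} : BoolComb s → BoolComb sᶜ
  | union {s t : Set (ℕ → ℕ)} : BoolComb s → BoolComb t → BoolComb (s ∪ t)

/-- The Borel class `Σ⁰_α` on Baire space (for `α ≥ 1`). -/
noncomputable def Sigma0 (α : Ordinal.{0}) : Set (Set (ℕ → ℕ)) :=
  if α = 1 then {s | IsOpen s}
  else {s | ∃ g : ℕ → Set (ℕ → ℕ), s = ⋃ n, g n ∧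
    ∀ n, ∃ β : {β : Ordinal.{0} // β < α}, 1 ≤ β.1 ∧ (g n)ᶜ ∈ Sigma0 β.1}
termination_by α
decreasing_by exact β.2

/-- The ambiguous Borel class `Δ⁰_α`. -/
noncomputable def Delta0 (α : Ordinal.{0}) : Set (Set (ℕ → ℕ)) :=
  {s | s ∈ Sigma0 α ∧ sᶜ ∈ Sigma0 α}

/-- The Boolean characteristic function. -/
noncomputable def chi (X : Set (ℕ → ℕ)) (f : ℕ → ℕ) : Bool := decide (f ∈ X)

/-- `G` guesses `S` based on the sequence of sets `Ss`. -/
def GuessesBased (G : List Bool → Bool) (Ss : ℕ → Set (ℕ → ℕ)) (S : Set (ℕ → ℕ)) : Prop :=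
  ∀ f : ℕ → ℕ, ∀ᶠ n in atTop,
    (G (List.ofFn (fun i : Fin n => chi (Ss i) f)) = true ↔ f ∈ S)

/-- `S` is `μ`th-order guessable. -/
def HigherGuessable (μ : Ordinal.{0}) (S : Set (ℕ → ℕ)) : Prop :=
  ∃ Ss : ℕ → Set (ℕ → ℕ), (∀ i, ∃ μi, μi < μ ∧ Ss i ∈ Delta0 (μi + 1)) ∧
    ∃ G : List Bool → Bool, GuessesBased G Ss S

/-!
Both hierarchies are driven by the same successor step. An infinite sequence lies in
`cl([X] ∩ S) ∩ cl([X] ∩ Sᶜ)` exactly when each of its initial segments is extended by a branch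
of `X` inside `S` and by one outside `S`, which is membership of every initial segment in the
next simplified remainder. Since `[·]` also commutes with intersections, the identity
`Rm_α(S) = [S_α]` propagates through successor and limit stages by transfinite induction.
-/

open Set

@[simp]
lemma res_length (f : ℕ → ℕ) (n : ℕ) : (res f n).length = n := by simp [res]

lemma res_eq_res_iff {f g : ℕ → ℕ} {n : ℕ} : res f n = res g n ↔ ∀ i < n, f i = g i := by
  simp [res, List.ofFn_inj, funext_iff, Fin.forall_iff]

lemma mem_closure_iff_exists_res_eq {A : Set (ℕ → ℕ)} {f : ℕ → ℕ} :
    f ∈ closure A ↔ ∀ n, ∃ g ∈ A, res g n = res f n := by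
  rw [(PiNat.isTopologicalBasis_cylinders fun _ : ℕ => ℕ).mem_closure_iff]
  constructor
  · intro h n
    obtain ⟨g, hfg, hg⟩ := h _ ⟨f, n, rfl⟩ (PiNat.self_mem_cylinder f n)
    exact ⟨g, hg, res_eq_res_iff.2 hfg⟩
  · rintro h _ ⟨x, n, rfl⟩ hf
    obtain ⟨g, hg, hgf⟩ := h n
    exact ⟨g, fun i hi => (res_eq_res_iff.1 hgf i hi).trans (hf i hi), hg⟩

section seqsIn

def SRemStep (S : Set (ℕ → ℕ)) (X : Set (List ℕ)) : Set (List ℕ) :=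
  {x | x ∈ X ∧ ∃ f g : ℕ → ℕ,
    f ∈ seqsIn X ∧ g ∈ seqsIn X ∧ res f x.length = x ∧ res g x.length = x ∧ f ∈ S ∧ g ∉ S}

@[simp]
lemma seqsIn_univ : seqsIn univ = univ := by
  ext f; simp [seqsIn]

lemma seqsIn_iInter {ι : Sort*} (X : ι → Set (List ℕ)) :
    seqsIn (⋂ i, X i) = ⋂ i, seqsIn (X i) := by
  ext f; simp only [seqsIn, mem_iInter, mem_ofPred_eq]; exact forall_comm

lemma seqsIn_SRemStep (S : Set (ℕ → ℕ)) (X : Set (List ℕ)) :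
    seqsIn (SRemStep S X) = closure (seqsIn X ∩ S) ∩ closure (seqsIn X ∩ Sᶜ) := by
  ext f
  simp only [SRemStep, seqsIn, mem_ofPred_eq, res_length, mem_inter_iff,
    mem_closure_iff_exists_res_eq]
  constructor
  · intro h
    constructor
    · intro n
      obtain ⟨-, g, -, hg, -, hgf, -, hgS, -⟩ := h n
      exact ⟨g, ⟨hg, hgS⟩, hgf⟩
    · intro n
      obtain ⟨-, -, g', -, hg', -, hg'f, -, hg'S⟩ := h n
      exact ⟨g', ⟨hg', hg'S⟩, hg'f⟩
  · rintro ⟨hin, hout⟩ n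
    obtain ⟨g, ⟨hg, hgS⟩, hgf⟩ := hin n
    obtain ⟨g', ⟨hg', hg'S⟩, hg'f⟩ := hout n
    exact ⟨hgf ▸ hg n, g, g', hg, hg', hgf, hg'f, hgS, hg'S⟩

end seqsIn

section SRem

variable (S : Set (ℕ → ℕ))

lemma SRem_zero : SRem S 0 = univ := by
  unfold SRem; rw [Ordinal.limitRecOn_zero]

lemma SRem_add_one (β : Ordinal.{0}) : SRem S (β + 1) = SRemStep S (SRem S β) := by
  unfold SRem; rw [Ordinal.limitRecOn_add_one]; rfl

lemma SRem_of_isSuccLimit {o : Ordinal.{0}} (ho : Order.IsSuccLimit o) :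
    SRem S o = ⋂ β < o, SRem S β := by
  unfold SRem; rw [Ordinal.limitRecOn_limit _ _ _ _ ho]

end SRem

section Rm

variable (A B : Set (ℕ → ℕ))

lemma Rm_zero : Rm A B 0 = univ := by
  rw [Rm, if_pos rfl]

lemma Rm_of_ne_zero {μ : Ordinal.{0}} (hμ : μ ≠ 0) :
    Rm A B μ = ⋂ ν : {ν // ν < μ}, closure (Rm A B ν.1 ∩ A) ∩ closure (Rm A B ν.1 ∩ B) := by
  rw [Rm, if_neg hμ]

lemma Rm_antitone : Antitone (Rm A B) := by
  intro ν μ hνμ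
  rcases eq_or_ne ν 0 with rfl | hν
  · simp [Rm_zero]
  · rw [Rm_of_ne_zero A B hν, Rm_of_ne_zero A B (ne_bot_of_le_ne_bot hν hνμ)]
    exact subset_iInter fun η => iInter_subset_of_subset ⟨η.1, η.2.trans_le hνμ⟩ subset_rfl

lemma Rm_add_one (β : Ordinal.{0}) :
    Rm A B (β + 1) = closure (Rm A B β ∩ A) ∩ closure (Rm A B β ∩ B) := by
  rw [Rm_of_ne_zero A B (pos_of_gt (lt_add_one β)).ne']
  refine (iInter_subset _ (⟨β, lt_add_one β⟩ : {ν // ν < β + 1})).antisymm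
    (subset_iInter fun ν => ?_)
  have hνβ : Rm A B β ⊆ Rm A B ν.1 := Rm_antitone A B (Order.lt_add_one_iff.1 ν.2)
  exact inter_subset_inter (closure_mono (inter_subset_inter_left _ hνβ))
    (closure_mono (inter_subset_inter_left _ hνβ))

lemma Rm_of_isSuccLimit {o : Ordinal.{0}} (ho : Order.IsSuccLimit o) :
    Rm A B o = ⋂ ν < o, Rm A B ν := by
  refine (subset_iInter₂ fun ν hν => Rm_antitone A B hν.le).antisymm ?_
  rw [Rm_of_ne_zero A B ho.ne_bot]
  refine subset_iInter fun ν => ?_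
  rw [← Rm_add_one]
  exact iInter₂_subset (ν.1 + 1) (ho.add_one_lt ν.2)

end Rm

theorem stmt0 (S : Set (ℕ → ℕ)) (α : Ordinal.{0}) :
    Rm S Sᶜ α = seqsIn (SRem S α) := by
  induction α using Ordinal.limitRecOn with
  | zero => rw [Rm_zero, SRem_zero, seqsIn_univ]
  | add_one β ih => rw [Rm_add_one, ih, SRem_add_one, seqsIn_SRemStep]
  | limit o ho ih =>
    rw [Rm_of_isSuccLimit _ _ ho, SRem_of_isSuccLimit _ ho]
    simp only [seqsIn_iInter]
    exact iInter₂_congr ih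
end

section
/- Let α > 0. If S = D_α((A_η)_{η<α}) where each A_η ⊆ ℕ^ℕ is open and the A_η are increasing, then S is guessable with fewer than α+1 mind changes. -/
open Filter Topology Classical

/-! Let `H σ` be the least `η < α` such that every extension of `σ` lies in
`A η` (and `α` if there is none). Along any `f` this rank is non-increasing, and since the `A η`
are open it eventually equals the least `η` with `f ∈ A η`; so guessing "the parity of `H σ` is
opposite to that of `α`" is eventually correct and can change only when `H` drops. -/

def extensions (σ : List ℕ) : Set (ℕ → ℕ) := {g | res g σ.length = σ}

theorem extensions_res (f : ℕ → ℕ) (n : ℕ) : extensions (res f n) = PiNat.cylinder f n := by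
  ext g
  simp [extensions, res, PiNat.mem_cylinder_iff, List.ofFn_inj, funext_iff, Fin.forall_iff]

theorem IsOpen.eventually_cylinder_subset {E : ℕ → Type*} [∀ n, TopologicalSpace (E n)]
    [∀ n, DiscreteTopology (E n)] {U : Set (∀ n, E n)} (hU : IsOpen U) {x : ∀ n, E n}
    (hx : x ∈ U) : ∀ᶠ n in atTop, PiNat.cylinder x n ⊆ U := by
  obtain ⟨_, ⟨y, m, rfl⟩, hxy, hU⟩ :=
    (PiNat.isTopologicalBasis_cylinders E).exists_subset_of_mem_open hx hU
  rw [← PiNat.mem_cylinder_iff_eq.1 hxy] at hU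
  exact eventually_atTop.2 ⟨m, fun n hn => (PiNat.cylinder_anti x hn).trans hU⟩

section CoverRank

variable {X : Type*} (α : Ordinal.{0}) (A : Ordinal.{0} → Set X)

noncomputable def coverRank (s : Set X) : Ordinal.{0} :=
  sInf (insert α {η | η < α ∧ s ⊆ A η})

variable {α A}

theorem coverRank_le (s : Set X) : coverRank α A s ≤ α :=
  csInf_le' (Set.mem_insert _ _)

theorem coverRank_le_of_subset {s : Set X} {η : Ordinal.{0}} (hη : η < α) (hs : s ⊆ A η) :
    coverRank α A s ≤ η :=
  csInf_le' (Set.mem_insert_of_mem _ ⟨hη, hs⟩)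

theorem subset_of_coverRank_lt {s : Set X} (h : coverRank α A s < α) :
    s ⊆ A (coverRank α A s) := by
  rcases csInf_mem (⟨α, Set.mem_insert _ _⟩ : (insert α {η | η < α ∧ s ⊆ A η}).Nonempty)
    with hα | ⟨-, hs⟩
  · exact absurd hα h.ne
  · exact hs

theorem coverRank_mono {s t : Set X} (hst : s ⊆ t) : coverRank α A s ≤ coverRank α A t := by
  rcases (coverRank_le t).lt_or_eq with ht | ht
  · exact coverRank_le_of_subset ht (hst.trans (subset_of_coverRank_lt ht))
  · exact (coverRank_le s).trans ht.ge

theorem mem_of_coverRank_singleton_lt {x : X} (h : coverRank α A {x} < α) :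
    x ∈ A (coverRank α A {x}) :=
  Set.singleton_subset_iff.1 (subset_of_coverRank_lt h)

theorem not_mem_of_lt_coverRank_singleton {x : X} {η : Ordinal.{0}}
    (hη : η < coverRank α A {x}) : x ∉ A η := fun hx =>
  hη.not_ge <|
    coverRank_le_of_subset (hη.trans_le (coverRank_le _)) (Set.singleton_subset_iff.2 hx)

end CoverRank

theorem mem_DSet_iff {α : Ordinal.{0}} {A : Ordinal.{0} → Set (ℕ → ℕ)} {f : ℕ → ℕ} :
    f ∈ DSet α A ↔ coverRank α A {f} < α ∧ (OrdEven (coverRank α A {f}) ↔ ¬ OrdEven α) := by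
  constructor
  · rintro ⟨η, hηα, hfη, hleast, hparity⟩
    have hη : coverRank α A {f} = η :=
      le_antisymm (coverRank_le_of_subset hηα (Set.singleton_subset_iff.2 hfη))
        (not_lt.1 fun h => hleast _ h (mem_of_coverRank_singleton_lt (h.trans hηα)))
    exact hη ▸ ⟨hηα, hparity⟩
  · rintro ⟨hlt, hparity⟩
    exact ⟨_, hlt, mem_of_coverRank_singleton_lt hlt,
      fun _ => not_mem_of_lt_coverRank_singleton, hparity⟩

theorem eventually_coverRank_cylinder_eq {α : Ordinal.{0}} {A : Ordinal.{0} → Set (ℕ → ℕ)}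
    (hopen : ∀ η, η < α → IsOpen (A η)) (f : ℕ → ℕ) :
    ∀ᶠ n in atTop, coverRank α A (PiNat.cylinder f n) = coverRank α A {f} := by
  have hsingleton n : coverRank α A {f} ≤ coverRank α A (PiNat.cylinder f n) :=
    coverRank_mono (Set.singleton_subset_iff.2 (PiNat.self_mem_cylinder f n))
  rcases (coverRank_le (A := A) {f}).lt_or_eq with hlt | heq
  · filter_upwards [(hopen _ hlt).eventually_cylinder_subset (mem_of_coverRank_singleton_lt hlt)]
      with n hn
    exact le_antisymm (coverRank_le_of_subset hlt hn) (hsingleton n)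
  · exact .of_forall fun n => le_antisymm ((coverRank_le _).trans heq.ge) (hsingleton n)

theorem guessableMC_of_antitone_rank {S : Set (ℕ → ℕ)} {α : Ordinal.{0}}
    (H : List ℕ → Ordinal.{0}) (p : Ordinal.{0} → Prop) (hH : ∀ σ, H σ < α)
    (hanti : ∀ f n, H (res f (n + 1)) ≤ H (res f n))
    (hguess : ∀ f, ∀ᶠ n in atTop, (p (H (res f n)) ↔ f ∈ S)) : GuessableMC S α := by
  refine ⟨fun σ => decide (p (H σ)), H, fun f => ?_, hH, hanti, fun f n hG => ?_⟩
  · simpa only [decide_eq_true_iff] using hguess f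
  · refine (hanti f n).lt_of_ne fun hHeq => hG ?_
    simp only [hHeq]

theorem stmt10_general (α : Ordinal.{0}) (A : Ordinal.{0} → Set (ℕ → ℕ))
    (hopen : ∀ η, η < α → IsOpen (A η))
    (S : Set (ℕ → ℕ)) (hS : S = DSet α A) :
    GuessableMC S (α + 1) := by
  subst hS
  refine guessableMC_of_antitone_rank (fun σ => coverRank α A (extensions σ))
    (fun η => η < α ∧ (OrdEven η ↔ ¬ OrdEven α))
    (fun σ => Order.lt_add_one_iff.2 (coverRank_le _)) (fun f n => ?_) (fun f => ?_)
  · simp only [extensions_res]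
    exact coverRank_mono (PiNat.cylinder_anti f n.le_succ)
  · filter_upwards [eventually_coverRank_cylinder_eq hopen f] with n hn
    rw [extensions_res, hn, mem_DSet_iff]

theorem stmt10 (α : Ordinal.{0}) (hα : 0 < α) (A : Ordinal.{0} → Set (ℕ → ℕ))
    (hopen : ∀ η, η < α → IsOpen (A η))
    (hmono : ∀ η η', η ≤ η' → η' < α → A η ⊆ A η')
    (S : Set (ℕ → ℕ)) (hS : S = DSet α A) :
    GuessableMC S (α + 1) :=
  stmt10_general α A hopen S hS
end

section
/- Suppose G and H witness that S is guessable with fewer than α mind changes. Then there is H' : ℕ^{<ℕ} → α such that G, H' also witness guessability with < α mind changes, H'(∅) = H(∅), and for all f ∈ ℕ^ℕ and n ∈ ℕ: H'(f↾(n+1)) has the same parity as H'(f↾n) if and only if G(f↾(n+1)) = G(f↾n). -/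
open Filter Topology Classical

/-!
Let `H' σ` be whichever of `H σ`, `H σ + 1` has the parity of `H []` if `G σ = G []` and the
opposite parity otherwise; then the parity of `H'` flips exactly when the guess changes, and
`H' [] = H []`. A strict decrease of `H` survives the shift because `a < b` gives
`a + 1 ≤ b`, and where `H` stays put the guess does too, so the shifted values agree. Hence `H'`
is still non-increasing along every sequence, so it stays below `H [] < α`.
-/

open scoped Ordinal

namespace Ordinal

theorem eq_zero_or_isSuccLimit_iff_omega0_dvd {l : Ordinal} :
    (l = 0 ∨ Order.IsSuccLimit l) ↔ ω ∣ l := by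
  rw [isSuccLimit_iff, ← isSuccPrelimit_iff_omega0_dvd]
  constructor
  · rintro (rfl | h)
    exacts [isSuccPrelimit_zero, h.2]
  · intro h
    by_cases hl : l = 0
    exacts [Or.inl hl, Or.inr ⟨hl, h⟩]

theorem exists_mod_omega0_eq_natCast (o : Ordinal) : ∃ n : ℕ, o % ω = n :=
  lt_omega0.mp (mod_lt o omega0_ne_zero)

theorem add_one_mod_omega0 (o : Ordinal) : (o + 1) % ω = o % ω + 1 := by
  obtain ⟨n, hn⟩ := exists_mod_omega0_eq_natCast o
  conv_lhs => rw [← div_add_mod o ω, add_assoc, mul_add_mod_self, hn]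
  rw [hn]
  exact_mod_cast natCast_mod_omega0 (n + 1)

end Ordinal

/-- `o % ω` is the finite part `n` of `o = λ + n`, since the limit-or-zero ordinals are the
multiples of `ω`. -/
theorem ordEven_iff_of_mod_omega0_eq {o : Ordinal.{0}} {n : ℕ} (h : o % ω = n) :
    OrdEven o ↔ Even n := by
  constructor
  · rintro ⟨l, m, hl, rfl, hm⟩
    obtain ⟨q, rfl⟩ := Ordinal.eq_zero_or_isSuccLimit_iff_omega0_dvd.mp hl
    rw [Ordinal.mul_add_mod_self, Ordinal.natCast_mod_omega0, Nat.cast_inj] at h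
    exact h ▸ hm
  · intro hn
    refine ⟨ω * (o / ω), n, Ordinal.eq_zero_or_isSuccLimit_iff_omega0_dvd.mpr (dvd_mul_right _ _),
      ?_, hn⟩
    rw [← h, Ordinal.div_add_mod]

theorem ordEven_add_one (o : Ordinal.{0}) : OrdEven (o + 1) ↔ ¬ OrdEven o := by
  obtain ⟨n, hn⟩ := Ordinal.exists_mod_omega0_eq_natCast o
  have hn' : (o + 1) % ω = ((n + 1 : ℕ) : Ordinal) := by
    rw [Ordinal.add_one_mod_omega0, hn, Nat.cast_succ]
  rw [ordEven_iff_of_mod_omega0_eq hn, ordEven_iff_of_mod_omega0_eq hn', Nat.even_add_one]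

noncomputable def adjustParity (o : Ordinal.{0}) (p : Prop) : Ordinal.{0} :=
  if OrdEven o ↔ p then o else o + 1

section adjustParity

variable {o : Ordinal.{0}} {p : Prop}

theorem ordEven_adjustParity_iff : OrdEven (adjustParity o p) ↔ p := by
  unfold adjustParity
  split_ifs with h
  · exact h
  · rw [ordEven_add_one]
    tauto

theorem adjustParity_of_ordEven_iff (h : OrdEven o ↔ p) : adjustParity o p = o :=
  if_pos h

theorem le_adjustParity : o ≤ adjustParity o p := by
  unfold adjustParity
  split_ifs
  exacts [le_rfl, le_self_add]

theorem adjustParity_le_of_lt {a b : Ordinal.{0}} (hab : a < b) (q : Prop) :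
    adjustParity a p ≤ adjustParity b q := by
  calc adjustParity a p ≤ a + 1 := by unfold adjustParity; split_ifs; exacts [le_self_add, le_rfl]
    _ ≤ b := Order.add_one_le_of_lt hab
    _ ≤ adjustParity b q := le_adjustParity

end adjustParity

theorem exists_res_eq (σ : List ℕ) : ∃ (f : ℕ → ℕ) (n : ℕ), res f n = σ :=
  ⟨fun i => σ.getD i 0, σ.length, by simp [res]⟩

theorem Bool.iff_eq_iff_iff_iff_eq (q : Prop) (a b c : Bool) :
    ((q ↔ a = c) ↔ (q ↔ b = c)) ↔ a = b := by
  cases a <;> cases b <;> cases c <;> simp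

noncomputable def parityCorrected (G : List ℕ → Bool) (H : List ℕ → Ordinal.{0}) (σ : List ℕ) :
    Ordinal.{0} :=
  adjustParity (H σ) (OrdEven (H []) ↔ G σ = G [])

section parityCorrected

variable {G : List ℕ → Bool} {H : List ℕ → Ordinal.{0}}

theorem ordEven_parityCorrected_iff (σ : List ℕ) :
    OrdEven (parityCorrected G H σ) ↔ (OrdEven (H []) ↔ G σ = G []) :=
  ordEven_adjustParity_iff

theorem parityCorrected_nil : parityCorrected G H [] = H [] :=
  adjustParity_of_ordEven_iff (by simp)

theorem parityCorrected_le {τ σ : List ℕ} (hle : H τ ≤ H σ) (hlt : G τ ≠ G σ → H τ < H σ) :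
    parityCorrected G H τ ≤ parityCorrected G H σ := by
  rcases hle.lt_or_eq with hlt' | heq
  · exact adjustParity_le_of_lt hlt' _
  · by_cases hG : G τ = G σ
    · simp only [parityCorrected, heq, hG, le_rfl]
    · exact absurd (hlt hG) heq.not_lt

theorem parityCorrected_lt {τ σ : List ℕ} (hne : G τ ≠ G σ) (hlt : H τ < H σ) :
    parityCorrected G H τ < parityCorrected G H σ := by
  have hle : parityCorrected G H τ ≤ parityCorrected G H σ := adjustParity_le_of_lt hlt _
  refine hle.lt_of_ne fun heq => hne ?_
  have hpar := ordEven_parityCorrected_iff (G := G) (H := H) τ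
  rw [heq, ordEven_parityCorrected_iff] at hpar
  exact (Bool.iff_eq_iff_iff_iff_eq _ _ _ _).mp hpar.symm

variable {S : Set (ℕ → ℕ)} {α : Ordinal.{0}}

theorem witnessMC_parityCorrected (hW : WitnessMC S α G H) :
    WitnessMC S α G (parityCorrected G H) := by
  obtain ⟨hG, hα, hle, hlt⟩ := hW
  have hstep (f : ℕ → ℕ) (n : ℕ) :
      parityCorrected G H (res f (n + 1)) ≤ parityCorrected G H (res f n) :=
    parityCorrected_le (hle f n) (hlt f n)
  refine ⟨hG, fun σ => ?_, hstep, fun f n hne => parityCorrected_lt hne (hlt f n hne)⟩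
  obtain ⟨f, n, rfl⟩ := exists_res_eq σ
  calc parityCorrected G H (res f n) ≤ parityCorrected G H (res f 0) :=
        antitone_nat_of_succ_le (f := fun m => parityCorrected G H (res f m)) (hstep f)
          (Nat.zero_le n)
    _ = H [] := by rw [show res f 0 = [] from List.ofFn_zero, parityCorrected_nil]
    _ < α := hα []

end parityCorrected

theorem stmt11 (S : Set (ℕ → ℕ)) (α : Ordinal.{0}) (G : List ℕ → Bool)
    (H : List ℕ → Ordinal.{0}) (hW : WitnessMC S α G H) :
    ∃ H' : List ℕ → Ordinal.{0}, WitnessMC S α G H' ∧ H' [] = H [] ∧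
      ∀ (f : ℕ → ℕ) (n : ℕ),
        ((OrdEven (H' (res f (n + 1))) ↔ OrdEven (H' (res f n))) ↔
          G (res f (n + 1)) = G (res f n)) := by
  refine ⟨parityCorrected G H, witnessMC_parityCorrected hW, parityCorrected_nil, fun f n => ?_⟩
  rw [ordEven_parityCorrected_iff, ordEven_parityCorrected_iff]
  exact Bool.iff_eq_iff_iff_iff_eq _ _ _ _
end

section
/- Let 1 ≤ μ < ω₁. If S is μth-order guessable, then S ∈ Δ⁰_{μ+1}. -/
open Filter Topology Classical

/-! Each set `{f | G (𝒮(f)↾n) = true}` is a finite Boolean combination of the `S_i`, hence in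
`Δ⁰_μ`, and `S` (resp. `Sᶜ`) is the set of `f` that eventually lie in these sets (resp. in their
complements). A set `⋃ N, ⋂ n ≥ N, B n` with every `B n ∈ Δ⁰_μ` is in `Σ⁰_{μ+1}`, since the
complement of each `⋂ n ≥ N, B n` is a countable union of `Σ⁰_μ` sets. -/

lemma Sigma0_one : Sigma0 1 = {s | IsOpen s} := by
  rw [Sigma0]; simp

lemma Sigma0_of_ne_one {α : Ordinal.{0}} (h : α ≠ 1) :
    Sigma0 α = {s | ∃ g : ℕ → Set (ℕ → ℕ), s = ⋃ n, g n ∧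
      ∀ n, ∃ β : {β : Ordinal.{0} // β < α}, 1 ≤ β.1 ∧ (g n)ᶜ ∈ Sigma0 β.1} := by
  rw [Sigma0]; simp [h]

lemma iUnion_mem_Sigma0 {μ : Ordinal.{0}} (hμ : 1 < μ) {ι : Type*} [Countable ι]
    {g : ι → Set (ℕ → ℕ)} (hg : ∀ i, ∃ β < μ, 1 ≤ β ∧ (g i)ᶜ ∈ Sigma0 β) :
    (⋃ i, g i) ∈ Sigma0 μ := by
  rw [Sigma0_of_ne_one hμ.ne']
  cases isEmpty_or_nonempty ι
  · refine ⟨fun _ => ∅, by simp, fun _ => ⟨⟨1, hμ⟩, le_rfl, ?_⟩⟩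
    simp [Sigma0_one]
  · obtain ⟨e, he⟩ := exists_surjective_nat ι
    refine ⟨g ∘ e, (he.iUnion_comp g).symm, fun n => ?_⟩
    obtain ⟨β, hβμ, hβ, hgβ⟩ := hg (e n)
    exact ⟨⟨β, hβμ⟩, hβ, hgβ⟩

lemma isOpen_mem_Sigma0 {μ : Ordinal.{0}} (hμ : 1 ≤ μ) {s : Set (ℕ → ℕ)} (hs : IsOpen s) :
    s ∈ Sigma0 μ := by
  rcases hμ.eq_or_lt with rfl | hμ
  · rwa [Sigma0_one]
  obtain ⟨U, hU, hsU⟩ := isGδ_iff_eq_iInter_nat.mp hs.isClosed_compl.isGδ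
  rw [← compl_compl s, hsU, Set.compl_iInter]
  exact iUnion_mem_Sigma0 hμ fun n => ⟨1, hμ, le_rfl, by simpa [Sigma0_one] using hU n⟩

lemma Sigma0_mono {β μ : Ordinal.{0}} (hβ : 1 ≤ β) (hβμ : β ≤ μ) : Sigma0 β ⊆ Sigma0 μ := by
  rcases hβμ.eq_or_lt with rfl | hβμ
  · exact le_rfl
  rcases hβ.eq_or_lt with rfl | hβ
  · intro s hs
    exact isOpen_mem_Sigma0 hβμ.le (by rwa [Sigma0_one] at hs)
  rw [Sigma0_of_ne_one hβ.ne', Sigma0_of_ne_one (hβ.trans hβμ).ne']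
  rintro s ⟨g, rfl, hg⟩
  refine ⟨g, rfl, fun n => ?_⟩
  obtain ⟨⟨γ, hγ⟩, h1, h2⟩ := hg n
  exact ⟨⟨γ, hγ.trans hβμ⟩, h1, h2⟩

lemma Sigma0_iUnion {μ : Ordinal.{0}} (hμ : 1 ≤ μ) {ι : Type*} [Countable ι]
    {s : ι → Set (ℕ → ℕ)} (hs : ∀ i, s i ∈ Sigma0 μ) : (⋃ i, s i) ∈ Sigma0 μ := by
  rcases hμ.eq_or_lt with rfl | hμ
  · simp only [Sigma0_one, Set.mem_ofPred_eq] at hs ⊢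
    exact isOpen_iUnion hs
  simp only [Sigma0_of_ne_one hμ.ne'] at hs
  choose g hg hgc using hs
  simp only [hg, ← Set.iUnion_prod' fun p : ι × ℕ => g p.1 p.2]
  refine iUnion_mem_Sigma0 hμ fun p => ?_
  obtain ⟨⟨β, hβμ⟩, hβ, hgβ⟩ := hgc p.1 p.2
  exact ⟨β, hβμ, hβ, hgβ⟩

lemma Sigma0_union {μ : Ordinal.{0}} (hμ : 1 ≤ μ) {s t : Set (ℕ → ℕ)}
    (hs : s ∈ Sigma0 μ) (ht : t ∈ Sigma0 μ) : s ∪ t ∈ Sigma0 μ := by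
  rw [Set.union_eq_iUnion]
  exact Sigma0_iUnion hμ fun b => by cases b <;> assumption

lemma Sigma0_inter {μ : Ordinal.{0}} (hμ : 1 ≤ μ) {s t : Set (ℕ → ℕ)}
    (hs : s ∈ Sigma0 μ) (ht : t ∈ Sigma0 μ) : s ∩ t ∈ Sigma0 μ := by
  rcases hμ.eq_or_lt with rfl | hμ
  · simp only [Sigma0_one, Set.mem_ofPred_eq] at hs ht ⊢
    exact hs.inter ht
  rw [Sigma0_of_ne_one hμ.ne'] at hs ht
  obtain ⟨g, rfl, hg⟩ := hs
  obtain ⟨g', rfl, hg'⟩ := ht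
  rw [Set.iUnion_inter_iUnion, ← Set.iUnion_prod' fun p : ℕ × ℕ => g p.1 ∩ g' p.2]
  refine iUnion_mem_Sigma0 hμ fun p => ?_
  obtain ⟨⟨β, hβμ⟩, hβ, hgβ⟩ := hg p.1
  obtain ⟨⟨β', hβ'μ⟩, hβ', hgβ'⟩ := hg' p.2
  refine ⟨max β β', max_lt hβμ hβ'μ, hβ.trans (le_max_left _ _), ?_⟩
  rw [Set.compl_inter]
  exact Sigma0_union (hβ.trans (le_max_left _ _))
    (Sigma0_mono hβ (le_max_left _ _) hgβ) (Sigma0_mono hβ' (le_max_right _ _) hgβ')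

lemma Sigma0_iInter_of_finite {μ : Ordinal.{0}} (hμ : 1 ≤ μ) {ι : Type*} [Finite ι]
    {s : ι → Set (ℕ → ℕ)} (hs : ∀ i, s i ∈ Sigma0 μ) : (⋂ i, s i) ∈ Sigma0 μ := by
  have := Fintype.ofFinite ι
  rw [← Set.iInf_eq_iInter, ← Finset.inf_univ_eq_iInf]
  exact Finset.inf_induction (isOpen_mem_Sigma0 hμ isOpen_univ)
    (fun _ h₁ _ h₂ => Sigma0_inter hμ h₁ h₂) fun i _ => hs i

lemma Delta0_mono {β μ : Ordinal.{0}} (hβ : 1 ≤ β) (hβμ : β ≤ μ) : Delta0 β ⊆ Delta0 μ :=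
  fun _ hs => ⟨Sigma0_mono hβ hβμ hs.1, Sigma0_mono hβ hβμ hs.2⟩

lemma setOf_chi_mem_Sigma0 {μ : Ordinal.{0}} (hμ : 1 ≤ μ) {Ss : ℕ → Set (ℕ → ℕ)}
    (hSs : ∀ i, Ss i ∈ Delta0 μ) (n : ℕ) (P : (Fin n → Bool) → Prop) :
    {f | P fun i => chi (Ss i) f} ∈ Sigma0 μ := by
  have hpattern : {f | P fun i => chi (Ss i) f} =
      ⋃ b : {b : Fin n → Bool // P b}, ⋂ i : Fin n, {f | chi (Ss i) f = b.1 i} := by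
    ext f
    simp only [Set.mem_ofPred_eq, Set.mem_iUnion, Set.mem_iInter, Subtype.exists, exists_prop]
    exact ⟨fun h => ⟨_, h, fun _ => rfl⟩, fun ⟨b, hb, hfb⟩ => funext hfb ▸ hb⟩
  rw [hpattern]
  refine Sigma0_iUnion hμ fun b => Sigma0_iInter_of_finite hμ fun i => ?_
  cases b.1 i
  · simpa [chi, Set.compl_def] using (hSs i).2
  · simpa [chi] using (hSs i).1

lemma setOf_chi_mem_Delta0 {μ : Ordinal.{0}} (hμ : 1 ≤ μ) {Ss : ℕ → Set (ℕ → ℕ)}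
    (hSs : ∀ i, Ss i ∈ Delta0 μ) (n : ℕ) (P : (Fin n → Bool) → Prop) :
    {f | P fun i => chi (Ss i) f} ∈ Delta0 μ :=
  ⟨setOf_chi_mem_Sigma0 hμ hSs n P, setOf_chi_mem_Sigma0 hμ hSs n fun b => ¬P b⟩

lemma setOf_eventually_mem_Sigma0_succ {μ : Ordinal.{0}} (hμ : 1 ≤ μ) {B : ℕ → Set (ℕ → ℕ)}
    (hB : ∀ n, (B n)ᶜ ∈ Sigma0 μ) : {f | ∀ᶠ n in atTop, f ∈ B n} ∈ Sigma0 (μ + 1) := by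
  have hlim : {f | ∀ᶠ n in atTop, f ∈ B n} = ⋃ N, ⋂ n : {n // N ≤ n}, B n.1 := by
    ext f
    simp [Filter.eventually_atTop]
  have hμ1 : 1 < μ + 1 := hμ.trans_lt (Order.lt_add_one_iff.mpr le_rfl)
  rw [hlim]
  refine iUnion_mem_Sigma0 hμ1 fun N => ⟨μ, Order.lt_add_one_iff.mpr le_rfl, hμ, ?_⟩
  rw [Set.compl_iInter]
  exact Sigma0_iUnion hμ fun n => hB n

lemma eq_setOf_eventually_mem {α ι : Type*} {l : Filter ι} [l.NeBot] {S : Set α}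
    {B : ι → Set α} (hB : ∀ f, ∀ᶠ n in l, (f ∈ B n ↔ f ∈ S)) :
    S = {f | ∀ᶠ n in l, f ∈ B n} := by
  ext f
  refine ⟨fun hf => (hB f).mono fun _ hn => hn.2 hf, fun hf => ?_⟩
  obtain ⟨n, hfB, hBS⟩ := (hf.and (hB f)).exists
  exact hBS.1 hfB

lemma mem_Delta0_succ_of_eventually {μ : Ordinal.{0}} (hμ : 1 ≤ μ) {S : Set (ℕ → ℕ)}
    {B : ℕ → Set (ℕ → ℕ)} (hB : ∀ n, B n ∈ Delta0 μ)
    (hBS : ∀ f, ∀ᶠ n in atTop, (f ∈ B n ↔ f ∈ S)) : S ∈ Delta0 (μ + 1) := by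
  have hBSc : ∀ f, ∀ᶠ n in atTop, (f ∈ (B n)ᶜ ↔ f ∈ Sᶜ) :=
    fun f => (hBS f).mono fun _ h => not_congr h
  rw [Delta0, Set.mem_ofPred_eq, eq_setOf_eventually_mem hBSc, eq_setOf_eventually_mem hBS]
  exact ⟨setOf_eventually_mem_Sigma0_succ hμ fun n => (hB n).2,
    setOf_eventually_mem_Sigma0_succ hμ fun n => by simpa using (hB n).1⟩

theorem stmt14_general (μ : Ordinal.{0}) (h1 : 1 ≤ μ)
    (S : Set (ℕ → ℕ)) (hS : HigherGuessable μ S) : S ∈ Delta0 (μ + 1) := by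
  obtain ⟨Ss, hSs, G, hG⟩ := hS
  have hSsΔ : ∀ i, Ss i ∈ Delta0 μ := fun i => by
    obtain ⟨μi, hμi, hSsi⟩ := hSs i
    exact Delta0_mono le_add_self (Order.add_one_le_iff.mpr hμi) hSsi
  exact mem_Delta0_succ_of_eventually h1
    (fun n => setOf_chi_mem_Delta0 h1 hSsΔ n fun b => G (List.ofFn b) = true) hG

theorem stmt14 (μ : Ordinal.{0}) (h1 : 1 ≤ μ) (h2 : μ < (Cardinal.aleph 1).ord)
    (S : Set (ℕ → ℕ)) (hS : HigherGuessable μ S) : S ∈ Delta0 (μ + 1) :=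
  stmt14_general μ h1 S hS
end
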